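/- Suppose 0 < E ≤ N and E-security holds. Then for every k ∈ [1:K], the common randomness satisfies H(S) ≥ (E/N) · H(A_{[1:N]}^{[k]} | Q_{[1:N]}^{[k]}). -/

import Mathlib

open Finset

/-- Probability that the finitely-valued random variable `X` (on the finite
probability space with pmf `p`) takes the value `x`. -/
noncomputable def prC {Ω α : Type*} [Fintype Ω] [DecidableEq α]
    (p : Ω → ℝ) (X : Ω → α) (x : α) : ℝ :=
  ∑ ω, if X ω = x then p ω else 0

/-- Shannon entropy `H(X)` of a finitely-valued random variable. -/
noncomputable def entH {Ω α : Type*} [Fintype Ω] [Fintype α] [DecidableEq α]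
    (p : Ω → ℝ) (X : Ω → α) : ℝ :=
  -∑ x, prC p X x * Real.log (prC p X x)

/-- Conditional entropy `H(X|Y) = H(X,Y) - H(Y)`. -/
noncomputable def condEntH {Ω α β : Type*} [Fintype Ω] [Fintype α] [DecidableEq α]
    [Fintype β] [DecidableEq β] (p : Ω → ℝ) (X : Ω → α) (Y : Ω → β) : ℝ :=
  entH p (fun ω => (X ω, Y ω)) - entH p Y

/-- Mutual information `I(X;Y) = H(X) + H(Y) - H(X,Y)`. -/
noncomputable def mutInfH {Ω α β : Type*} [Fintype Ω] [Fintype α] [DecidableEq α]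
    [Fintype β] [DecidableEq β] (p : Ω → ℝ) (X : Ω → α) (Y : Ω → β) : ℝ :=
  entH p X + entH p Y - entH p (fun ω => (X ω, Y ω))

section Library

variable {Ω : Type*} [Fintype Ω] {p : Ω → ℝ}

lemma prC_nonneg {α : Type*} [DecidableEq α] (hp0 : ∀ ω, 0 ≤ p ω) (X : Ω → α) (x : α) :
    0 ≤ prC p X x := by
  unfold prC
  apply Finset.sum_nonneg
  intro ω _
  split <;> simp [hp0 ω]

lemma sum_prC {α : Type*} [Fintype α] [DecidableEq α] (hp1 : ∑ ω, p ω = 1) (X : Ω → α) :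
    ∑ x, prC p X x = 1 := by
  unfold prC
  rw [Finset.sum_comm]
  simp only [Finset.sum_ite_eq, Finset.mem_univ, if_true]
  exact hp1

lemma prC_comp {α β : Type*} [Fintype α] [DecidableEq α] [DecidableEq β]
    (X : Ω → α) (f : α → β) (b : β) :
    prC p (fun ω => f (X ω)) b = ∑ x, if f x = b then prC p X x else 0 := by
  unfold prC
  have h1 : ∀ x : α, (if f x = b then ∑ ω, if X ω = x then p ω else 0 else 0)
      = ∑ ω, if X ω = x then (if f x = b then p ω else 0) else 0 := by
    intro x
    split_ifs with h <;> simp [h]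
  rw [Finset.sum_congr rfl (fun x _ => h1 x), Finset.sum_comm]
  apply Finset.sum_congr rfl
  intro ω _
  have h2 : ∀ x : α, (if X ω = x then (if f x = b then p ω else 0) else 0)
      = if X ω = x then (if f (X ω) = b then p ω else 0) else 0 := by
    intro x
    split_ifs with h <;> simp_all
  rw [Finset.sum_congr rfl (fun x _ => h2 x), Finset.sum_ite_eq]
  simp

lemma prC_exists_of_ne_zero {α : Type*} [DecidableEq α] (X : Ω → α) (x : α)
    (h : prC p X x ≠ 0) : ∃ ω, X ω = x := by
  by_contra hc
  push_neg at hc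
  apply h
  unfold prC
  apply Finset.sum_eq_zero
  intro ω _
  simp [hc ω]


lemma entH_comp {α β : Type*} [Fintype α] [DecidableEq α] [Fintype β] [DecidableEq β]
    (X : Ω → α) (f : α → β)
    (hf : ∀ ω ω', f (X ω) = f (X ω') → X ω = X ω') :
    entH p (fun ω => f (X ω)) = entH p X := by
  classical
  unfold entH
  congr 1
  -- key fact: for x with prC X x ≠ 0, prC (f∘X) (f x) = prC X x
  have key : ∀ x : α, prC p X x ≠ 0 → prC p (fun ω => f (X ω)) (f x) = prC p X x := by
    intro x hx
    obtain ⟨ω₀, hω₀⟩ := prC_exists_of_ne_zero X x hx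
    unfold prC
    apply Finset.sum_congr rfl
    intro ω _
    have : (f (X ω) = f x) ↔ (X ω = x) := by
      constructor
      · intro h
        rw [← hω₀] at h ⊢
        exact hf ω ω₀ h
      · intro h; rw [h]
    simp only [this]
  have g0 : (0:ℝ) * Real.log 0 = 0 := by simp
  rw [← Finset.sum_filter_of_ne (s := Finset.univ)
      (p := fun b => prC p (fun ω => f (X ω)) b ≠ 0) (fun b _ hb hc => hb (by rw [hc]; exact g0)),
    ← Finset.sum_filter_of_ne (s := Finset.univ)
      (p := fun x => prC p X x ≠ 0) (fun x _ hx hc => hx (by rw [hc]; exact g0))]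
  symm
  apply Finset.sum_bij (fun x _ => f x)
  · intro x hx
    simp only [Finset.mem_filter, Finset.mem_univ, true_and] at hx ⊢
    rw [key x hx]
    exact hx
  · intro x hx x' hx' hxx
    simp only [Finset.mem_filter, Finset.mem_univ, true_and] at hx hx'
    obtain ⟨ω, hω⟩ := prC_exists_of_ne_zero X x hx
    obtain ⟨ω', hω'⟩ := prC_exists_of_ne_zero X x' hx'
    rw [← hω, ← hω']
    apply hf
    rw [hω, hω', hxx]
  · intro b hb
    simp only [Finset.mem_filter, Finset.mem_univ, true_and] at hb
    have : ∃ x : α, f x = b ∧ prC p X x ≠ 0 := by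
      by_contra hc
      push_neg at hc
      apply hb
      rw [prC_comp]
      apply Finset.sum_eq_zero
      intro x _
      split_ifs with h
      · exact hc x h
      · rfl
    obtain ⟨x, hxb, hx⟩ := this
    exact ⟨x, by simp [hx], hxb⟩
  · intro x hx
    simp only [Finset.mem_filter, Finset.mem_univ, true_and] at hx
    rw [key x hx]

end Library

lemma sum_swap' {ι κ : Type*} [Fintype ι] [Fintype κ] (F : ι → κ → ℝ) :
    ∑ i, ∑ j, F i j = ∑ j, ∑ i, F i j := Finset.sum_comm

lemma gibbs_ssub {α β γ : Type*} [Fintype α] [Fintype β] [Fintype γ]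
    (a : α → β → γ → ℝ) (ha : ∀ x y z, 0 ≤ a x y z)
    (hsum : ∑ x, ∑ y, ∑ z, a x y z = 1) :
    (∑ x, ∑ y, (∑ z, a x y z) * Real.log (∑ z, a x y z))
      + (∑ y, ∑ z, (∑ x, a x y z) * Real.log (∑ x, a x y z))
    ≤ (∑ x, ∑ y, ∑ z, a x y z * Real.log (a x y z))
      + (∑ y, (∑ x, ∑ z, a x y z) * Real.log (∑ x, ∑ z, a x y z)) := by
  classical
  set m : α → β → ℝ := fun x y => ∑ z, a x y z with hm
  set n : β → γ → ℝ := fun y z => ∑ x, a x y z with hn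
  set c : β → ℝ := fun y => ∑ x, ∑ z, a x y z with hc
  have hm0 : ∀ x y, 0 ≤ m x y := fun x y => Finset.sum_nonneg fun z _ => ha x y z
  have hn0 : ∀ y z, 0 ≤ n y z := fun y z => Finset.sum_nonneg fun x _ => ha x y z
  have hc0 : ∀ y, 0 ≤ c y := fun y =>
    Finset.sum_nonneg fun x _ => Finset.sum_nonneg fun z _ => ha x y z
  have ham : ∀ x y z, a x y z ≤ m x y := fun x y z =>
    Finset.single_le_sum (fun z _ => ha x y z) (mem_univ z)
  have han : ∀ x y z, a x y z ≤ n y z := fun x y z =>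
    Finset.single_le_sum (fun x _ => ha x y z) (mem_univ x)
  have hmc : ∀ x y, m x y ≤ c y := fun x y =>
    Finset.single_le_sum (f := fun x => m x y) (fun x _ => hm0 x y) (mem_univ x)
  have hcn : ∀ y, ∑ z, n y z = c y := fun y => sum_swap' (fun z x => a x y z)
  have hcm : ∀ y, ∑ x, m x y = c y := fun _ => rfl
  -- rewrite all four sums as triple sums in x, y, z order
  have h_m : (∑ x, ∑ y, m x y * Real.log (m x y))
      = ∑ x, ∑ y, ∑ z, a x y z * Real.log (m x y) := by
    apply Finset.sum_congr rfl; intro x _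
    apply Finset.sum_congr rfl; intro y _
    rw [hm, Finset.sum_mul]
  have h_n : (∑ y, ∑ z, n y z * Real.log (n y z))
      = ∑ x, ∑ y, ∑ z, a x y z * Real.log (n y z) := by
    rw [sum_swap' (fun x y => ∑ z, a x y z * Real.log (n y z))]
    apply Finset.sum_congr rfl; intro y _
    rw [sum_swap' (fun x z => a x y z * Real.log (n y z))]
    apply Finset.sum_congr rfl; intro z _
    rw [hn, Finset.sum_mul]
  have h_c : (∑ y, c y * Real.log (c y))
      = ∑ x, ∑ y, ∑ z, a x y z * Real.log (c y) := by
    rw [sum_swap' (fun x y => ∑ z, a x y z * Real.log (c y))]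
    apply Finset.sum_congr rfl; intro y _
    rw [hc, Finset.sum_mul]
    apply Finset.sum_congr rfl; intro x _
    rw [Finset.sum_mul]
  rw [h_m, h_n, h_c]
  -- the pointwise bound
  have key : ∑ x, ∑ y, ∑ z,
      (a x y z * Real.log (m x y) + a x y z * Real.log (n y z)
        - a x y z * Real.log (a x y z) - a x y z * Real.log (c y)) ≤ 0 := by
    have step1 : ∀ x y z,
        a x y z * Real.log (m x y) + a x y z * Real.log (n y z)
          - a x y z * Real.log (a x y z) - a x y z * Real.log (c y)
        ≤ (if a x y z = 0 then 0 else m x y * n y z / c y) - a x y z := by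
      intro x y z
      by_cases h0 : a x y z = 0
      · simp [h0]
      · have hapos : 0 < a x y z := lt_of_le_of_ne (ha x y z) (Ne.symm h0)
        have hmpos : 0 < m x y := lt_of_lt_of_le hapos (ham x y z)
        have hnpos : 0 < n y z := lt_of_lt_of_le hapos (han x y z)
        have hcpos : 0 < c y := lt_of_lt_of_le hmpos (hmc x y)
        have hne : 0 < m x y * n y z / (a x y z * c y) :=
          div_pos (mul_pos hmpos hnpos) (mul_pos hapos hcpos)
        have hlog : Real.log (m x y) + Real.log (n y z) - Real.log (a x y z)
            - Real.log (c y) = Real.log (m x y * n y z / (a x y z * c y)) := by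
          rw [Real.log_div (by positivity) (by positivity),
            Real.log_mul (ne_of_gt hmpos) (ne_of_gt hnpos),
            Real.log_mul (ne_of_gt hapos) (ne_of_gt hcpos)]
          ring
        have heq : a x y z * Real.log (m x y) + a x y z * Real.log (n y z)
            - a x y z * Real.log (a x y z) - a x y z * Real.log (c y)
            = a x y z * Real.log (m x y * n y z / (a x y z * c y)) := by
          rw [← hlog]; ring
        rw [heq, if_neg h0]
        calc a x y z * Real.log (m x y * n y z / (a x y z * c y))
            ≤ a x y z * (m x y * n y z / (a x y z * c y) - 1) :=
              mul_le_mul_of_nonneg_left (Real.log_le_sub_one_of_pos hne) (ha x y z)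
          _ = m x y * n y z / c y - a x y z := by
              field_simp
    calc ∑ x, ∑ y, ∑ z,
        (a x y z * Real.log (m x y) + a x y z * Real.log (n y z)
          - a x y z * Real.log (a x y z) - a x y z * Real.log (c y))
        ≤ ∑ x, ∑ y, ∑ z, ((if a x y z = 0 then 0 else m x y * n y z / c y) - a x y z) := by
          apply Finset.sum_le_sum; intro x _
          apply Finset.sum_le_sum; intro y _
          apply Finset.sum_le_sum; intro z _
          exact step1 x y z
      _ = (∑ x, ∑ y, ∑ z, (if a x y z = 0 then 0 else m x y * n y z / c y)) - 1 := by
          simp only [Finset.sum_sub_distrib]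
          rw [hsum]
      _ ≤ (∑ x, ∑ y, ∑ z, (if c y = 0 then 0 else m x y * n y z / c y)) - 1 := by
          apply sub_le_sub_right
          apply Finset.sum_le_sum; intro x _
          apply Finset.sum_le_sum; intro y _
          apply Finset.sum_le_sum; intro z _
          by_cases h0 : a x y z = 0
          · rw [if_pos h0]
            split_ifs with h1
            · exact le_refl 0
            · exact div_nonneg (mul_nonneg (hm0 x y) (hn0 y z)) (hc0 y)
          · have hapos : 0 < a x y z := lt_of_le_of_ne (ha x y z) (Ne.symm h0)
            have hcpos : 0 < c y :=
              lt_of_lt_of_le (lt_of_lt_of_le hapos (ham x y z)) (hmc x y)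
            rw [if_neg h0, if_neg (ne_of_gt hcpos)]
      _ ≤ 1 - 1 := by
          apply sub_le_sub_right
          rw [sum_swap' (fun x y => ∑ z, if c y = 0 then 0 else m x y * n y z / c y)]
          have peryy : ∀ y, (∑ x, ∑ z, (if c y = 0 then 0 else m x y * n y z / c y)) ≤ c y := by
            intro y
            by_cases h1 : c y = 0
            · simp [h1, hc0 y]
            · simp only [if_neg h1]
              have hstep : ∑ x, ∑ z, m x y * n y z / c y
                  = ((∑ x, m x y) * (∑ z, n y z)) / c y := by
                rw [Finset.sum_mul_sum, Finset.sum_div]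
                apply Finset.sum_congr rfl; intro x _
                rw [Finset.sum_div]
              rw [hstep, hcn, hcm]
              rw [mul_div_assoc, div_self h1, mul_one]
          calc (∑ y, ∑ x, ∑ z, (if c y = 0 then 0 else m x y * n y z / c y))
              ≤ ∑ y, c y := Finset.sum_le_sum fun y _ => peryy y
            _ = 1 := by
                rw [← hsum]
                exact sum_swap' (fun y x => ∑ z, a x y z)
      _ = 0 := by ring
  have split : ∑ x, ∑ y, ∑ z,
      (a x y z * Real.log (m x y) + a x y z * Real.log (n y z)
        - a x y z * Real.log (a x y z) - a x y z * Real.log (c y))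
      = (∑ x, ∑ y, ∑ z, a x y z * Real.log (m x y))
        + (∑ x, ∑ y, ∑ z, a x y z * Real.log (n y z))
        - (∑ x, ∑ y, ∑ z, a x y z * Real.log (a x y z))
        - (∑ x, ∑ y, ∑ z, a x y z * Real.log (c y)) := by
    simp only [Finset.sum_add_distrib, Finset.sum_sub_distrib]
  rw [split] at key
  linarith

section Library2

variable {Ω : Type*} [Fintype Ω] {p : Ω → ℝ}
variable {α β γ : Type*} [Fintype α] [DecidableEq α] [Fintype β] [DecidableEq β]
  [Fintype γ] [DecidableEq γ]

lemma sum_ite_collapse {ι : Type*} [Fintype ι] [DecidableEq ι] (x : ι) (F : ι → ℝ) :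
    ∑ i, (if i = x then F i else 0) = F x := by
  rw [Finset.sum_ite_eq' Finset.univ x F]
  simp

lemma sum_prC_triple (hp1 : ∑ ω, p ω = 1) (X : Ω → α) (Y : Ω → β) (Z : Ω → γ) :
    ∑ x, ∑ y, ∑ z, prC p (fun ω => (X ω, Y ω, Z ω)) (x, y, z) = 1 := by
  rw [← sum_prC hp1 (fun ω => (X ω, Y ω, Z ω))]
  rw [Fintype.sum_prod_type]
  apply Finset.sum_congr rfl; intro x _
  rw [Fintype.sum_prod_type]

lemma prC_marg_XY (X : Ω → α) (Y : Ω → β) (Z : Ω → γ) (x : α) (y : β) :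
    prC p (fun ω => (X ω, Y ω)) (x, y)
      = ∑ z, prC p (fun ω => (X ω, Y ω, Z ω)) (x, y, z) := by
  have h := prC_comp (p := p) (fun ω => (X ω, Y ω, Z ω))
    (fun t => (t.1, t.2.1)) (x, y)
  rw [show (fun ω => ((X ω, Y ω, Z ω).1, (X ω, Y ω, Z ω).2.1)) = fun ω => (X ω, Y ω) from rfl] at h
  rw [h, Fintype.sum_prod_type]
  simp only [Prod.mk.injEq]
  have s1 : ∀ x' : α, (∑ t : β × γ, if x' = x ∧ t.1 = y
        then prC p (fun ω => (X ω, Y ω, Z ω)) (x', t) else 0)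
      = if x' = x then (∑ t : β × γ, if t.1 = y
        then prC p (fun ω => (X ω, Y ω, Z ω)) (x', t) else 0) else 0 := by
    intro x'; split_ifs with h1 <;> simp [h1]
  rw [Finset.sum_congr rfl (fun x' _ => s1 x'), sum_ite_collapse]
  rw [Fintype.sum_prod_type]
  have s2 : ∀ y' : β, (∑ z, if ((y', z) : β × γ).1 = y
        then prC p (fun ω => (X ω, Y ω, Z ω)) (x, y', z) else 0)
      = if y' = y then (∑ z, prC p (fun ω => (X ω, Y ω, Z ω)) (x, y', z)) else 0 := by
    intro y'; split_ifs with h1 <;> simp [h1]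
  rw [Finset.sum_congr rfl (fun y' _ => s2 y'), sum_ite_collapse]

lemma prC_marg_YZ (X : Ω → α) (Y : Ω → β) (Z : Ω → γ) (y : β) (z : γ) :
    prC p (fun ω => (Y ω, Z ω)) (y, z)
      = ∑ x, prC p (fun ω => (X ω, Y ω, Z ω)) (x, y, z) := by
  have h := prC_comp (p := p) (fun ω => (X ω, Y ω, Z ω)) (fun t => t.2) (y, z)
  rw [show (fun ω => (X ω, Y ω, Z ω).2) = fun ω => (Y ω, Z ω) from rfl] at h
  rw [h, Fintype.sum_prod_type]
  apply Finset.sum_congr rfl; intro x' _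
  exact sum_ite_collapse ((y, z) : β × γ) (fun t => prC p (fun ω => (X ω, Y ω, Z ω)) (x', t))

lemma prC_marg_Y (X : Ω → α) (Y : Ω → β) (Z : Ω → γ) (y : β) :
    prC p Y y = ∑ x, ∑ z, prC p (fun ω => (X ω, Y ω, Z ω)) (x, y, z) := by
  have h := prC_comp (p := p) (fun ω => (X ω, Y ω, Z ω)) (fun t => t.2.1) y
  rw [show (fun ω => (X ω, Y ω, Z ω).2.1) = fun ω => Y ω from rfl] at h
  rw [h, Fintype.sum_prod_type]
  apply Finset.sum_congr rfl; intro x' _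
  rw [Fintype.sum_prod_type]
  have s2 : ∀ y' : β, (∑ z, if ((y', z) : β × γ).1 = y
        then prC p (fun ω => (X ω, Y ω, Z ω)) (x', y', z) else 0)
      = if y' = y then (∑ z, prC p (fun ω => (X ω, Y ω, Z ω)) (x', y', z)) else 0 := by
    intro y'
    split_ifs with h1 <;> simp [h1]
  rw [Finset.sum_congr rfl (fun y' _ => s2 y'), sum_ite_collapse]

lemma entH_ssub (hp0 : ∀ ω, 0 ≤ p ω) (hp1 : ∑ ω, p ω = 1)
    (X : Ω → α) (Y : Ω → β) (Z : Ω → γ) :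
    entH p (fun ω => (X ω, Y ω, Z ω)) + entH p Y
      ≤ entH p (fun ω => (X ω, Y ω)) + entH p (fun ω => (Y ω, Z ω)) := by
  classical
  set a : α → β → γ → ℝ := fun x y z => prC p (fun ω => (X ω, Y ω, Z ω)) (x, y, z) with hadef
  have ha : ∀ x y z, 0 ≤ a x y z := fun x y z => prC_nonneg hp0 _ _
  have hsum : ∑ x, ∑ y, ∑ z, a x y z = 1 := sum_prC_triple hp1 X Y Z
  have hgib := gibbs_ssub a ha hsum
  have e1 : entH p (fun ω => (X ω, Y ω, Z ω))
      = -∑ x, ∑ y, ∑ z, a x y z * Real.log (a x y z) := by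
    unfold entH
    congr 1
    rw [Fintype.sum_prod_type]
    apply Finset.sum_congr rfl; intro x _
    rw [Fintype.sum_prod_type]
  have e2 : entH p Y = -∑ y, (∑ x, ∑ z, a x y z) * Real.log (∑ x, ∑ z, a x y z) := by
    unfold entH
    congr 1
    apply Finset.sum_congr rfl; intro y _
    rw [prC_marg_Y X Y Z y]
  have e3 : entH p (fun ω => (X ω, Y ω))
      = -∑ x, ∑ y, (∑ z, a x y z) * Real.log (∑ z, a x y z) := by
    unfold entH
    congr 1
    rw [Fintype.sum_prod_type]
    apply Finset.sum_congr rfl; intro x _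
    apply Finset.sum_congr rfl; intro y _
    rw [prC_marg_XY X Y Z x y]
  have e4 : entH p (fun ω => (Y ω, Z ω))
      = -∑ y, ∑ z, (∑ x, a x y z) * Real.log (∑ x, a x y z) := by
    unfold entH
    congr 1
    rw [Fintype.sum_prod_type]
    apply Finset.sum_congr rfl; intro y _
    apply Finset.sum_congr rfl; intro z _
    rw [prC_marg_YZ X Y Z y z]
  rw [e1, e2, e3, e4]
  linarith

end Library2

section Library3

variable {Ω : Type*} [Fintype Ω] {p : Ω → ℝ}
variable {α β γ : Type*} [Fintype α] [DecidableEq α] [Fintype β] [DecidableEq β]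
  [Fintype γ] [DecidableEq γ]

lemma entH_const (hp1 : ∑ ω, p ω = 1) (c : α) : entH p (fun _ => c) = 0 := by
  unfold entH
  rw [neg_eq_zero]
  apply Finset.sum_eq_zero
  intro b _
  have : prC p (fun _ : Ω => c) b = if c = b then 1 else 0 := by
    unfold prC
    by_cases h : c = b <;> simp [h, hp1]
  rw [this]
  by_cases h : c = b <;> simp [h]

lemma entH_pair_swap (X : Ω → α) (Y : Ω → β) :
    entH p (fun ω => (Y ω, X ω)) = entH p (fun ω => (X ω, Y ω)) :=
  entH_comp (fun ω => (X ω, Y ω)) (fun q => (q.2, q.1))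
    (fun ω ω' h => by simp only [Prod.mk.injEq] at h ⊢; exact ⟨h.2, h.1⟩)

lemma entH_subadd (hp0 : ∀ ω, 0 ≤ p ω) (hp1 : ∑ ω, p ω = 1) (X : Ω → α) (Y : Ω → β) :
    entH p (fun ω => (X ω, Y ω)) ≤ entH p X + entH p Y := by
  have h := entH_ssub hp0 hp1 X (fun _ => (() : Unit)) Y
  have r1 : entH p (fun ω => (X ω, (() : Unit), Y ω)) = entH p (fun ω => (X ω, Y ω)) :=
    entH_comp (fun ω => (X ω, Y ω)) (fun q => (q.1, (() : Unit), q.2))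
      (fun ω ω' hh => by simp only [Prod.mk.injEq] at hh ⊢; exact ⟨hh.1, hh.2.2⟩)
  have r2 : entH p (fun _ : Ω => (() : Unit)) = 0 := entH_const hp1 _
  have r3 : entH p (fun ω => (X ω, (() : Unit))) = entH p X :=
    entH_comp X (fun x => (x, (() : Unit)))
      (fun ω ω' hh => by simp only [Prod.mk.injEq] at hh; exact hh.1)
  have r4 : entH p (fun ω => ((() : Unit), Y ω)) = entH p Y :=
    entH_comp Y (fun y => ((() : Unit), y))
      (fun ω ω' hh => by simp only [Prod.mk.injEq] at hh; exact hh.2)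
  linarith

lemma entH_marg_le (hp0 : ∀ ω, 0 ≤ p ω) (hp1 : ∑ ω, p ω = 1) (X : Ω → α) (Y : Ω → β) :
    entH p Y ≤ entH p (fun ω => (X ω, Y ω)) := by
  have h := entH_ssub hp0 hp1 X Y X
  have r1 : entH p (fun ω => (X ω, Y ω, X ω)) = entH p (fun ω => (X ω, Y ω)) :=
    entH_comp (fun ω => (X ω, Y ω)) (fun q => (q.1, q.2, q.1))
      (fun ω ω' hh => by simp only [Prod.mk.injEq] at hh ⊢; exact ⟨hh.1, hh.2.1⟩)
  have r2 : entH p (fun ω => (Y ω, X ω)) = entH p (fun ω => (X ω, Y ω)) :=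
    entH_pair_swap X Y
  linarith

lemma entH_marg_le' (hp0 : ∀ ω, 0 ≤ p ω) (hp1 : ∑ ω, p ω = 1) (X : Ω → α) (Y : Ω → β) :
    entH p X ≤ entH p (fun ω => (X ω, Y ω)) := by
  have := entH_marg_le hp0 hp1 Y X
  rw [entH_pair_swap X Y] at this
  exact this

lemma prC_le_one (hp0 : ∀ ω, 0 ≤ p ω) (hp1 : ∑ ω, p ω = 1) (X : Ω → α) (x : α) :
    prC p X x ≤ 1 := by
  rw [← sum_prC hp1 X]
  exact Finset.single_le_sum (fun x' _ => prC_nonneg hp0 X x') (mem_univ x)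

lemma entH_nonneg (hp0 : ∀ ω, 0 ≤ p ω) (hp1 : ∑ ω, p ω = 1) (X : Ω → α) :
    0 ≤ entH p X := by
  unfold entH
  rw [neg_nonneg]
  apply Finset.sum_nonpos
  intro x _
  have h0 := prC_nonneg hp0 X x
  have h1 := prC_le_one hp0 hp1 X x
  have hl : Real.log (prC p X x) ≤ 0 := Real.log_nonpos h0 h1
  nlinarith

lemma condEntH_nonneg (hp0 : ∀ ω, 0 ≤ p ω) (hp1 : ∑ ω, p ω = 1) (X : Ω → α) (Y : Ω → β) :
    0 ≤ condEntH p X Y :=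
  sub_nonneg.mpr (entH_marg_le hp0 hp1 X Y)

lemma condEntH_le_entH (hp0 : ∀ ω, 0 ≤ p ω) (hp1 : ∑ ω, p ω = 1) (X : Ω → α) (Y : Ω → β) :
    condEntH p X Y ≤ entH p X := by
  have := entH_subadd hp0 hp1 X Y
  unfold condEntH
  have h0 := entH_nonneg hp0 hp1 Y
  linarith

lemma condEntH_mono_right (hp0 : ∀ ω, 0 ≤ p ω) (hp1 : ∑ ω, p ω = 1)
    (X : Ω → α) (Y : Ω → β) (f : β → γ) :
    condEntH p X Y ≤ condEntH p X (fun ω => f (Y ω)) := by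
  have h := entH_ssub hp0 hp1 X (fun ω => f (Y ω)) Y
  have r1 : entH p (fun ω => (X ω, f (Y ω), Y ω)) = entH p (fun ω => (X ω, Y ω)) :=
    entH_comp (fun ω => (X ω, Y ω)) (fun q => (q.1, f q.2, q.2))
      (fun ω ω' hh => by simp only [Prod.mk.injEq] at hh ⊢; exact ⟨hh.1, hh.2.2⟩)
  have r2 : entH p (fun ω => (f (Y ω), Y ω)) = entH p Y :=
    entH_comp Y (fun y => (f y, y))
      (fun ω ω' hh => by simp only [Prod.mk.injEq] at hh; exact hh.2)
  unfold condEntH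
  linarith

lemma condEntH_comp_left (X : Ω → α) (Y : Ω → β) (f : α → γ)
    (hf : ∀ ω ω', f (X ω) = f (X ω') → X ω = X ω') :
    condEntH p (fun ω => f (X ω)) Y = condEntH p X Y := by
  unfold condEntH
  have : entH p (fun ω => (f (X ω), Y ω)) = entH p (fun ω => (X ω, Y ω)) :=
    entH_comp (fun ω => (X ω, Y ω)) (fun q => (f q.1, q.2))
      (fun ω ω' hh => by
        simp only [Prod.mk.injEq] at hh ⊢
        exact ⟨hf ω ω' hh.1, hh.2⟩)
  rw [this]

lemma condEntH_comp_right (X : Ω → α) (Y : Ω → β) (f : β → γ)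
    (hf : ∀ ω ω', f (Y ω) = f (Y ω') → Y ω = Y ω') :
    condEntH p X (fun ω => f (Y ω)) = condEntH p X Y := by
  unfold condEntH
  have e1 : entH p (fun ω => (X ω, f (Y ω))) = entH p (fun ω => (X ω, Y ω)) :=
    entH_comp (fun ω => (X ω, Y ω)) (fun q => (q.1, f q.2))
      (fun ω ω' hh => by
        simp only [Prod.mk.injEq] at hh ⊢
        exact ⟨hh.1, hf ω ω' hh.2⟩)
  have e2 : entH p (fun ω => f (Y ω)) = entH p Y := entH_comp Y f hf
  rw [e1, e2]

lemma condEntH_chain (U : Ω → α) (V : Ω → β) (Y : Ω → γ) :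
    condEntH p (fun ω => (U ω, V ω)) Y
      = condEntH p V Y + condEntH p U (fun ω => (V ω, Y ω)) := by
  unfold condEntH
  have : entH p (fun ω => ((U ω, V ω), Y ω)) = entH p (fun ω => (U ω, V ω, Y ω)) :=
    entH_comp (fun ω => (U ω, V ω, Y ω)) (fun t => ((t.1, t.2.1), t.2.2))
      (fun ω ω' hh => by
        simp only [Prod.mk.injEq] at hh ⊢
        exact ⟨hh.1.1, hh.1.2, hh.2⟩)
  rw [this]
  ring

lemma condEntH_pair_le (hp0 : ∀ ω, 0 ≤ p ω) (hp1 : ∑ ω, p ω = 1)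
    (U : Ω → α) (V : Ω → β) (Y : Ω → γ) :
    condEntH p (fun ω => (U ω, V ω)) Y ≤ condEntH p U Y + condEntH p V Y := by
  rw [condEntH_chain]
  have h := condEntH_mono_right hp0 hp1 U (fun ω => (V ω, Y ω)) Prod.snd
  have h2 : condEntH p U (fun ω => Prod.snd (V ω, Y ω)) = condEntH p U Y := rfl
  rw [h2] at h
  linarith

end Library3

section Library4

variable {Ω : Type*} [Fintype Ω] {p : Ω → ℝ}
variable {α β γ : Type*} [Fintype α] [DecidableEq α] [Fintype β] [DecidableEq β]
  [Fintype γ] [DecidableEq γ]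

lemma entH_assoc (U : Ω → α) (V : Ω → β) (Y : Ω → γ) :
    entH p (fun ω => ((U ω, V ω), Y ω)) = entH p (fun ω => (U ω, V ω, Y ω)) :=
  entH_comp (fun ω => (U ω, V ω, Y ω)) (fun t => ((t.1, t.2.1), t.2.2))
    (fun ω ω' hh => by
      simp only [Prod.mk.injEq] at hh ⊢
      exact ⟨hh.1.1, hh.1.2, hh.2⟩)

lemma entH_comp_le (hp0 : ∀ ω, 0 ≤ p ω) (hp1 : ∑ ω, p ω = 1) (T : Ω → α) (f : α → β) :
    entH p (fun ω => f (T ω)) ≤ entH p T := by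
  have h1 := entH_marg_le' hp0 hp1 (fun ω => f (T ω)) T
  have h2 : entH p (fun ω => (f (T ω), T ω)) = entH p T :=
    entH_comp T (fun t => (f t, t))
      (fun ω ω' hh => by simp only [Prod.mk.injEq] at hh; exact hh.2)
  linarith

lemma condEntH_const (c : α) (Y : Ω → β) : condEntH p (fun _ => c) Y = 0 := by
  unfold condEntH
  have : entH p (fun ω => ((c : α), Y ω)) = entH p Y :=
    entH_comp Y (fun y => (c, y))
      (fun ω ω' hh => by simp only [Prod.mk.injEq] at hh; exact hh.2)
  rw [this, sub_self]

/-- mask of a family of random variables restricted to a finset of indices -/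
def maskF {Ω α : Type*} {N : ℕ} (F : Fin N → Ω → α) (ℰ : Finset (Fin N)) :
    Ω → Fin N → Option α :=
  fun ω n => if n ∈ ℰ then some (F n ω) else none

lemma mask_sub {N : ℕ} (F : Fin N → Ω → α) {ℰ' ℰ : Finset (Fin N)} (h : ℰ' ⊆ ℰ) :
    maskF F ℰ' = fun ω m => if m ∈ ℰ' then maskF F ℰ ω m else none := by
  funext ω m
  by_cases hm : m ∈ ℰ'
  · simp [maskF, hm, h hm]
  · simp [maskF, hm]

lemma mask_insert {N : ℕ} (F : Fin N → Ω → α) {𝒢 : Finset (Fin N)} {n : Fin N}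
    (hn : n ∉ 𝒢) :
    maskF F (insert n 𝒢)
      = fun ω m => if m = n then some (F n ω) else maskF F 𝒢 ω m := by
  funext ω m
  by_cases hm : m = n
  · subst hm; simp [maskF]
  · by_cases hg : m ∈ 𝒢 <;> simp [maskF, Finset.mem_insert, hm, hg]

lemma mask_insert_inj {N : ℕ} (F : Fin N → Ω → α) {𝒢 : Finset (Fin N)} {n : Fin N}
    (hn : n ∉ 𝒢) (a a' : α) (g g' : Fin N → Option α)
    (hg : g n = none) (hg' : g' n = none)
    (h : (fun m => if m = n then some a else g m) = fun m => if m = n then some a' else g' m) :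
    a = a' ∧ g = g' := by
  constructor
  · have h1 := congrFun h n
    simpa using h1
  · funext m
    by_cases hm : m = n
    · subst hm; rw [hg, hg']
    · have h1 := congrFun h m
      simpa [hm] using h1

lemma maskF_apply_self {N : ℕ} (F : Fin N → Ω → α) (𝒢 : Finset (Fin N)) (n : Fin N)
    (hn : n ∉ 𝒢) (ω : Ω) : maskF F 𝒢 ω n = none := by
  simp [maskF, hn]

end Library4


set_option synthInstance.maxSize 1024 in
set_option maxHeartbeats 2000000 in
/-- Bound on the common randomness (equation (60) of the paper): under
E-security, `H(S) ≥ (E/N) · H(A_{[1:N]}^{[k]} | Q_{[1:N]}^{[k]})`. -/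
theorem stmt_4
    {Ω 𝕎 𝔹 𝔸 𝕊 : Type} [Fintype Ω] [Fintype 𝕎] [DecidableEq 𝕎]
    [Fintype 𝔹] [DecidableEq 𝔹] [Fintype 𝔸] [DecidableEq 𝔸]
    [Fintype 𝕊] [DecidableEq 𝕊]
    {K N E : ℕ} (hE : 0 < E) (hEN : E ≤ N)
    (p : Ω → ℝ) (hp0 : ∀ ω, 0 ≤ p ω) (hp1 : ∑ ω, p ω = 1)
    (W : Fin K → Ω → 𝕎) (Q : Fin N → Fin K → Ω → 𝔹)
    (A : Fin N → Fin K → Ω → 𝔸) (S : Ω → 𝕊)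
    -- (i) the queries are independent of the messages
    (hQW : mutInfH p (fun ω (n : Fin N) (k : Fin K) => Q n k ω) (fun ω k => W k ω) = 0)
    -- (ii) the common randomness is independent of the messages and queries
    (hS : mutInfH p S
      (fun ω => ((fun k => W k ω), (fun (n : Fin N) (k : Fin K) => Q n k ω))) = 0)
    -- (iii) the answers are deterministic functions of query, messages and `S`
    (hA : ∀ (n : Fin N) (k : Fin K),
      condEntH p (A n k) (fun ω => (Q n k ω, (fun j => W j ω), S ω)) = 0)
    -- E-security
    (hsec : ∀ ℰ : Finset (Fin N), ℰ.card = E → ∀ k : Fin K,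
      mutInfH p (fun ω j => W j ω)
        (fun ω => ((fun (n : {x // x ∈ ℰ}) => A n.1 k ω),
                   (fun (n : {x // x ∈ ℰ}) => Q n.1 k ω))) = 0) :
    ∀ k : Fin K,
      entH p S ≥ ((E : ℝ) / N) *
        condEntH p (fun ω (n : Fin N) => A n k ω) (fun ω (n : Fin N) => Q n k ω) := by
  intro k
  have hN : 0 < N := lt_of_lt_of_le hE hEN
  haveI : NeZero N := ⟨hN.ne'⟩
  letI : NatCast (Fin N) := Fin.NatCast.instNatCast N
  -- notation
  set FA : Fin N → Ω → 𝔸 := fun n ω => A n k ω with hFA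
  set FQ : Fin N → Ω → 𝔹 := fun n ω => Q n k ω with hFQ
  set Qf : Ω → Fin N → 𝔹 := fun ω n => Q n k ω with hQfdef
  set Cb : Fin N → Finset (Fin N) := fun j => Finset.univ.filter (fun m => m < j) with hCb
  set d : Fin N → ℝ :=
    fun j => condEntH p (A j k) (fun ω => (maskF FA (Cb j) ω, Qf ω)) with hd
  -- Step (security, masked version)
  have hsecM : ∀ ℰ : Finset (Fin N), ℰ.card = E →
      entH p (fun ω => ((fun j => W j ω), (maskF FA ℰ ω, maskF FQ ℰ ω)))
        = entH p (fun ω (j : Fin K) => W j ω)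
          + entH p (fun ω => (maskF FA ℰ ω, maskF FQ ℰ ω)) := by
    intro ℰ hc
    have h0' : entH p (fun ω (j : Fin K) => W j ω)
        + entH p (fun ω => ((fun n : {x // x ∈ ℰ} => A n.1 k ω),
            (fun n : {x // x ∈ ℰ} => Q n.1 k ω)))
        - entH p (fun ω => ((fun j : Fin K => W j ω),
            ((fun n : {x // x ∈ ℰ} => A n.1 k ω),
             (fun n : {x // x ∈ ℰ} => Q n.1 k ω)))) = 0 := by
      have h := hsec ℰ hc k
      unfold mutInfH at h
      exact h
    set F : (({x // x ∈ ℰ} → 𝔸) × ({x // x ∈ ℰ} → 𝔹))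
        → ((Fin N → Option 𝔸) × (Fin N → Option 𝔹)) :=
      fun q => ((fun n => if h : n ∈ ℰ then some (q.1 ⟨n, h⟩) else none),
                (fun n => if h : n ∈ ℰ then some (q.2 ⟨n, h⟩) else none)) with hF
    have hFinj : ∀ q q', F q = F q' → q = q' := by
      intro q q' h
      have h1 := congrArg Prod.fst h
      have h2 := congrArg Prod.snd h
      simp only [hF] at h1 h2
      apply Prod.ext
      · funext n
        have h3 := congrFun h1 n.1
        rw [dif_pos n.2, dif_pos n.2] at h3
        exact Option.some.inj h3
      · funext n
        have h3 := congrFun h2 n.1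
        rw [dif_pos n.2, dif_pos n.2] at h3
        exact Option.some.inj h3
    have hFT : ∀ ω : Ω, F ((fun n : {x // x ∈ ℰ} => A n.1 k ω),
          (fun n : {x // x ∈ ℰ} => Q n.1 k ω))
        = (maskF FA ℰ ω, maskF FQ ℰ ω) := by
      intro ω
      simp only [hF]
      apply Prod.ext
      · funext n
        by_cases hn : n ∈ ℰ <;> simp [maskF, hn, hFA, hFQ]
      · funext n
        by_cases hn : n ∈ ℰ <;> simp [maskF, hn, hFA, hFQ]
    have e1 : entH p (fun ω => (maskF FA ℰ ω, maskF FQ ℰ ω))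
        = entH p (fun ω => ((fun n : {x // x ∈ ℰ} => A n.1 k ω),
            (fun n : {x // x ∈ ℰ} => Q n.1 k ω))) := by
      have hfun2 : (fun ω => (maskF FA ℰ ω, maskF FQ ℰ ω))
          = fun ω => F ((fun n : {x // x ∈ ℰ} => A n.1 k ω),
              (fun n : {x // x ∈ ℰ} => Q n.1 k ω)) :=
        funext fun ω => (hFT ω).symm
      rw [hfun2]
      exact entH_comp _ F (fun ω ω' hh => hFinj _ _ hh)
    have e2 : entH p (fun ω => ((fun j => W j ω), (maskF FA ℰ ω, maskF FQ ℰ ω)))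
        = entH p (fun ω => ((fun j : Fin K => W j ω),
            ((fun n : {x // x ∈ ℰ} => A n.1 k ω),
             (fun n : {x // x ∈ ℰ} => Q n.1 k ω)))) := by
      have hfun : (fun ω => ((fun j : Fin K => W j ω), (maskF FA ℰ ω, maskF FQ ℰ ω)))
          = fun ω => ((fun j : Fin K => W j ω),
              F ((fun n : {x // x ∈ ℰ} => A n.1 k ω),
                 (fun n : {x // x ∈ ℰ} => Q n.1 k ω))) := by
        funext ω
        rw [hFT ω]
      rw [hfun]
      exact entH_comp (fun ω => ((fun j : Fin K => W j ω),
          ((fun n : {x // x ∈ ℰ} => A n.1 k ω),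
           (fun n : {x // x ∈ ℰ} => Q n.1 k ω))))
        (fun q => (q.1, F q.2))
        (fun ω ω' hh => by
          have h1 := congrArg Prod.fst hh
          have h2 := congrArg Prod.snd hh
          exact Prod.ext h1 (hFinj _ _ h2))
    rw [e1, e2]
    linarith [h0']
  -- Step A: per-subset bound by H(S)
  have stepA : ∀ ℰ : Finset (Fin N), ℰ.card = E →
      condEntH p (maskF FA ℰ) (maskF FQ ℰ) ≤ entH p S := by
    intro ℰ hc
    have h1 := hsecM ℰ hc
    have hswap : entH p (fun ω => ((fun j : Fin K => W j ω), (maskF FA ℰ ω, maskF FQ ℰ ω)))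
        = entH p (fun ω => ((maskF FA ℰ ω, maskF FQ ℰ ω), (fun j : Fin K => W j ω))) :=
      entH_pair_swap (fun ω => (maskF FA ℰ ω, maskF FQ ℰ ω)) (fun ω (j : Fin K) => W j ω)
    have hassoc : entH p (fun ω => ((maskF FA ℰ ω, maskF FQ ℰ ω), (fun j : Fin K => W j ω)))
        = entH p (fun ω => (maskF FA ℰ ω, (maskF FQ ℰ ω, (fun j : Fin K => W j ω)))) :=
      entH_assoc (maskF FA ℰ) (maskF FQ ℰ) (fun ω (j : Fin K) => W j ω)
    have hsub : entH p (fun ω => (maskF FQ ℰ ω, (fun j : Fin K => W j ω)))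
        ≤ entH p (maskF FQ ℰ) + entH p (fun ω (j : Fin K) => W j ω) :=
      entH_subadd hp0 hp1 _ _
    have key1 : condEntH p (maskF FA ℰ) (maskF FQ ℰ)
        ≤ condEntH p (maskF FA ℰ)
            (fun ω => (maskF FQ ℰ ω, (fun j : Fin K => W j ω))) := by
      have d1 : condEntH p (maskF FA ℰ) (maskF FQ ℰ)
          = entH p (fun ω => (maskF FA ℰ ω, maskF FQ ℰ ω)) - entH p (maskF FQ ℰ) := rfl
      have d2 : condEntH p (maskF FA ℰ)
            (fun ω => (maskF FQ ℰ ω, (fun j : Fin K => W j ω)))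
          = entH p (fun ω => (maskF FA ℰ ω, (maskF FQ ℰ ω, (fun j : Fin K => W j ω))))
            - entH p (fun ω => (maskF FQ ℰ ω, (fun j : Fin K => W j ω))) := rfl
      rw [d1, d2]
      linarith [h1, hswap, hassoc, hsub]
    have key2 : condEntH p (maskF FA ℰ)
          (fun ω => (maskF FQ ℰ ω, (fun j : Fin K => W j ω)))
        ≤ entH p S + condEntH p (maskF FA ℰ)
            (fun ω => (S ω, (maskF FQ ℰ ω, (fun j : Fin K => W j ω)))) := by
      have hm : entH p (fun ω => (maskF FA ℰ ω, (maskF FQ ℰ ω, (fun j : Fin K => W j ω))))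
          ≤ entH p (fun ω => (maskF FA ℰ ω,
              (S ω, (maskF FQ ℰ ω, (fun j : Fin K => W j ω))))) :=
        entH_comp_le hp0 hp1
          (fun ω => (maskF FA ℰ ω, (S ω, (maskF FQ ℰ ω, (fun j : Fin K => W j ω)))))
          (fun t => (t.1, t.2.2))
      have hchain : condEntH p (fun ω => (maskF FA ℰ ω, S ω))
            (fun ω => (maskF FQ ℰ ω, (fun j : Fin K => W j ω)))
          = condEntH p S (fun ω => (maskF FQ ℰ ω, (fun j : Fin K => W j ω)))
            + condEntH p (maskF FA ℰ)
                (fun ω => (S ω, (maskF FQ ℰ ω, (fun j : Fin K => W j ω)))) :=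
        condEntH_chain (maskF FA ℰ) S (fun ω => (maskF FQ ℰ ω, (fun j : Fin K => W j ω)))
      have hassoc2 : entH p (fun ω => ((maskF FA ℰ ω, S ω),
            (maskF FQ ℰ ω, (fun j : Fin K => W j ω))))
          = entH p (fun ω => (maskF FA ℰ ω,
              (S ω, (maskF FQ ℰ ω, (fun j : Fin K => W j ω))))) :=
        entH_assoc (maskF FA ℰ) S (fun ω => (maskF FQ ℰ ω, (fun j : Fin K => W j ω)))
      have hSle : condEntH p S (fun ω => (maskF FQ ℰ ω, (fun j : Fin K => W j ω)))
          ≤ entH p S :=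
        condEntH_le_entH hp0 hp1 _ _
      have d1 : condEntH p (maskF FA ℰ)
            (fun ω => (maskF FQ ℰ ω, (fun j : Fin K => W j ω)))
          = entH p (fun ω => (maskF FA ℰ ω, (maskF FQ ℰ ω, (fun j : Fin K => W j ω))))
            - entH p (fun ω => (maskF FQ ℰ ω, (fun j : Fin K => W j ω))) := rfl
      have d3 : condEntH p (fun ω => (maskF FA ℰ ω, S ω))
            (fun ω => (maskF FQ ℰ ω, (fun j : Fin K => W j ω)))
          = entH p (fun ω => ((maskF FA ℰ ω, S ω),
              (maskF FQ ℰ ω, (fun j : Fin K => W j ω))))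
            - entH p (fun ω => (maskF FQ ℰ ω, (fun j : Fin K => W j ω))) := rfl
      linarith [hm, hchain, hassoc2, hSle, d1, d3]
    have zero1 : ∀ n ∈ ℰ, condEntH p (A n k)
        (fun ω => (S ω, (maskF FQ ℰ ω, (fun j : Fin K => W j ω)))) ≤ 0 := by
      intro n hn
      have hstep : condEntH p (A n k)
          (fun ω => (S ω, (maskF FQ ℰ ω, (fun j : Fin K => W j ω))))
          ≤ condEntH p (A n k)
            (fun ω => ((fun t : 𝕊 × ((Fin N → Option 𝔹) × (Fin K → 𝕎)) =>
                (t.2.1 n, t.2.2, t.1))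
              ((S ω, (maskF FQ ℰ ω, (fun j : Fin K => W j ω)))))) :=
        condEntH_mono_right hp0 hp1 (A n k)
          (fun ω => (S ω, (maskF FQ ℰ ω, (fun j : Fin K => W j ω))))
          (fun t : 𝕊 × ((Fin N → Option 𝔹) × (Fin K → 𝕎)) => (t.2.1 n, t.2.2, t.1))
      have heq2 : (fun ω => ((fun t : 𝕊 × ((Fin N → Option 𝔹) × (Fin K → 𝕎)) =>
              (t.2.1 n, t.2.2, t.1))
            ((S ω, (maskF FQ ℰ ω, (fun j : Fin K => W j ω))))))
          = fun ω => ((some (Q n k ω) : Option 𝔹), ((fun j : Fin K => W j ω), S ω)) := by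
        funext ω
        simp [maskF, hn, hFQ]
      rw [heq2] at hstep
      have heq3 : condEntH p (A n k)
          (fun ω => ((some (Q n k ω) : Option 𝔹), ((fun j : Fin K => W j ω), S ω)))
          = condEntH p (A n k)
            (fun ω => (Q n k ω, ((fun j : Fin K => W j ω), S ω))) :=
        condEntH_comp_right (A n k)
          (fun ω => (Q n k ω, ((fun j : Fin K => W j ω), S ω)))
          (fun t => ((some t.1 : Option 𝔹), t.2))
          (fun ω ω' hh => by
            have ha1 := congrArg Prod.fst hh
            have ha2 := congrArg Prod.snd hh
            exact Prod.ext (Option.some.inj ha1) ha2)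
      rw [heq3, hA n k] at hstep
      exact hstep
    have zero2 : ∀ (mm : ℕ) (𝒢 : Finset (Fin N)), 𝒢.card = mm → 𝒢 ⊆ ℰ →
        condEntH p (maskF FA 𝒢)
          (fun ω => (S ω, (maskF FQ ℰ ω, (fun j : Fin K => W j ω)))) ≤ 0 := by
      intro mm
      induction mm with
      | zero =>
        intro 𝒢 hc0 _
        rw [Finset.card_eq_zero.mp hc0]
        have hmask : maskF FA (∅ : Finset (Fin N))
            = fun _ => (fun _ => none : Fin N → Option 𝔸) := by
          funext ω nn
          simp [maskF]
        rw [hmask, condEntH_const]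
      | succ mm ih =>
        intro 𝒢 hc0 hsub
        have hne' : 𝒢.Nonempty := Finset.card_pos.mp (by rw [hc0]; exact Nat.succ_pos mm)
        obtain ⟨j', hj'mem⟩ := hne'
        set 𝒢' := 𝒢.erase j' with h𝒢'
        have hc'' : 𝒢'.card = mm := by
          rw [h𝒢', Finset.card_erase_of_mem hj'mem, hc0]
          rfl
        have hj'ne : j' ∉ 𝒢' := Finset.notMem_erase j' 𝒢
        have hins' : insert j' 𝒢' = 𝒢 := Finset.insert_erase hj'mem
        have e0 : condEntH p (maskF FA 𝒢)
            (fun ω => (S ω, (maskF FQ ℰ ω, (fun j : Fin K => W j ω))))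
            = condEntH p (fun ω => (A j' k ω, maskF FA 𝒢' ω))
              (fun ω => (S ω, (maskF FQ ℰ ω, (fun j : Fin K => W j ω)))) := by
          rw [← hins', mask_insert FA hj'ne]
          exact condEntH_comp_left (fun ω => (A j' k ω, maskF FA 𝒢' ω)) _
            (fun q : 𝔸 × (Fin N → Option 𝔸) => (fun m => if m = j' then some q.1 else q.2 m))
            (fun ω ω' hh => by
              obtain ⟨ha1, ha2⟩ := mask_insert_inj FA hj'ne (A j' k ω) (A j' k ω')
                (maskF FA 𝒢' ω) (maskF FA 𝒢' ω')
                (maskF_apply_self FA 𝒢' j' hj'ne ω) (maskF_apply_self FA 𝒢' j' hj'ne ω') hh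
              exact Prod.ext ha1 ha2)
        have e1 : condEntH p (fun ω => (A j' k ω, maskF FA 𝒢' ω))
              (fun ω => (S ω, (maskF FQ ℰ ω, (fun j : Fin K => W j ω))))
            ≤ condEntH p (A j' k)
                (fun ω => (S ω, (maskF FQ ℰ ω, (fun j : Fin K => W j ω))))
              + condEntH p (maskF FA 𝒢')
                (fun ω => (S ω, (maskF FQ ℰ ω, (fun j : Fin K => W j ω)))) :=
          condEntH_pair_le hp0 hp1 _ _ _
        have hz1 := zero1 j' (hsub hj'mem)
        have hz2 := ih 𝒢' hc'' (subset_trans (Finset.erase_subset j' 𝒢) hsub)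
        rw [e0]
        linarith [e1, hz1, hz2]
    have key3 := zero2 ℰ.card ℰ rfl (subset_refl ℰ)
    linarith [key1, key2, key3]
  -- exact chain rule over an arbitrary finset
  have chainExact : ∀ (m : ℕ) (ℰ : Finset (Fin N)), ℰ.card = m →
      condEntH p (maskF FA ℰ) Qf
        = ∑ j ∈ ℰ, condEntH p (A j k) (fun ω => (maskF FA (ℰ ∩ Cb j) ω, Qf ω)) := by
    intro m
    induction m with
    | zero =>
      intro ℰ hc
      rw [Finset.card_eq_zero.mp hc]
      have hmask : maskF FA (∅ : Finset (Fin N))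
          = fun _ => (fun _ => none : Fin N → Option 𝔸) := by
        funext ω n
        simp [maskF]
      rw [hmask, Finset.sum_empty]
      exact condEntH_const _ _
    | succ m ih =>
      intro ℰ hc
      have hne : ℰ.Nonempty := Finset.card_pos.mp (by rw [hc]; exact Nat.succ_pos m)
      set j := ℰ.max' hne with hjdef
      have hjmem : j ∈ ℰ := Finset.max'_mem ℰ hne
      set ℰ' := ℰ.erase j with hℰ'
      have hc' : ℰ'.card = m := by
        rw [hℰ', Finset.card_erase_of_mem hjmem, hc]
        rfl
      have hjne : j ∉ ℰ' := Finset.notMem_erase j ℰ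
      have hins : insert j ℰ' = ℰ := Finset.insert_erase hjmem
      have e0 : condEntH p (maskF FA ℰ) Qf
          = condEntH p (fun ω => (A j k ω, maskF FA ℰ' ω)) Qf := by
        rw [← hins, mask_insert FA hjne]
        exact condEntH_comp_left (fun ω => (A j k ω, maskF FA ℰ' ω)) Qf
          (fun q : 𝔸 × (Fin N → Option 𝔸) => (fun m => if m = j then some q.1 else q.2 m))
          (fun ω ω' hh => by
            obtain ⟨h1, h2⟩ := mask_insert_inj FA hjne (A j k ω) (A j k ω')
              (maskF FA ℰ' ω) (maskF FA ℰ' ω')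
              (maskF_apply_self FA ℰ' j hjne ω) (maskF_apply_self FA ℰ' j hjne ω') hh
            exact Prod.ext h1 h2)
      have e1 : condEntH p (fun ω => (A j k ω, maskF FA ℰ' ω)) Qf
          = condEntH p (maskF FA ℰ') Qf
            + condEntH p (A j k) (fun ω => (maskF FA ℰ' ω, Qf ω)) :=
        condEntH_chain (A j k) (maskF FA ℰ') Qf
      have ihe := ih ℰ' hc'
      have hfj : ℰ ∩ Cb j = ℰ' := by
        rw [hℰ']
        ext x
        simp only [Finset.mem_inter, Finset.mem_erase, hCb, Finset.mem_filter,
          Finset.mem_univ, true_and]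
        constructor
        · rintro ⟨hx, hlt⟩
          exact ⟨ne_of_lt hlt, hx⟩
        · rintro ⟨hne', hx⟩
          exact ⟨hx, lt_of_le_of_ne (Finset.le_max' ℰ x hx) hne'⟩
      have hfj' : ∀ x ∈ ℰ', ℰ ∩ Cb x = ℰ' ∩ Cb x := by
        intro x hx
        have hxE : x ∈ ℰ := by
          have hx' : x ∈ ℰ.erase j := by rw [← hℰ']; exact hx
          exact Finset.mem_of_mem_erase hx'
        have hxle : x ≤ j := Finset.le_max' ℰ x hxE
        rw [hℰ']
        ext y
        simp only [Finset.mem_inter, Finset.mem_erase, hCb, Finset.mem_filter,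
          Finset.mem_univ, true_and]
        constructor
        · rintro ⟨hy, hlt⟩
          exact ⟨⟨ne_of_lt (lt_of_lt_of_le hlt hxle), hy⟩, hlt⟩
        · rintro ⟨⟨hyne, hy⟩, hlt⟩
          exact ⟨hy, hlt⟩
      rw [e0, e1, ihe, ← Finset.sum_erase_add ℰ _ hjmem, ← hℰ']
      congr 1
      · apply Finset.sum_congr rfl
        intro x hx
        rw [hfj' x hx]
      · rw [hfj]
  -- lower bound for any finset
  have windowLB : ∀ ℰ : Finset (Fin N),
      (∑ j ∈ ℰ, d j) ≤ condEntH p (maskF FA ℰ) Qf := by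
    intro ℰ
    rw [chainExact ℰ.card ℰ rfl]
    apply Finset.sum_le_sum
    intro j hj
    have h : d j ≤ condEntH p (A j k)
        (fun ω => ((fun t : (Fin N → Option 𝔸) × (Fin N → 𝔹) =>
          ((fun m => if m ∈ ℰ ∩ Cb j then t.1 m else none), t.2))
            (maskF FA (Cb j) ω, Qf ω))) :=
      condEntH_mono_right hp0 hp1 (A j k) (fun ω => (maskF FA (Cb j) ω, Qf ω))
        (fun t : (Fin N → Option 𝔸) × (Fin N → 𝔹) =>
          ((fun m => if m ∈ ℰ ∩ Cb j then t.1 m else none), t.2))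
    have heq : (fun ω => ((fun t : (Fin N → Option 𝔸) × (Fin N → 𝔹) =>
          ((fun m => if m ∈ ℰ ∩ Cb j then t.1 m else none), t.2))
            (maskF FA (Cb j) ω, Qf ω)))
        = fun ω => (maskF FA (ℰ ∩ Cb j) ω, Qf ω) := by
      funext ω
      rw [mask_sub FA (Finset.inter_subset_right)]
    rw [heq] at h
    exact h
  -- the full-tuple conditional entropy
  have fullEq : condEntH p (fun ω (n : Fin N) => A n k ω) Qf = ∑ j, d j := by
    have hAf : maskF FA Finset.univ
        = fun ω => (fun a : Fin N → 𝔸 => (fun m => some (a m)))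
            ((fun ω (n : Fin N) => A n k ω) ω) := by
      funext ω m
      simp [maskF, hFA]
    have e0 : condEntH p (maskF FA Finset.univ) Qf
        = condEntH p (fun ω (n : Fin N) => A n k ω) Qf := by
      rw [hAf]
      exact condEntH_comp_left (fun ω (n : Fin N) => A n k ω) Qf
        (fun a : Fin N → 𝔸 => (fun m => some (a m)))
        (fun ω ω' hh => by
          funext m
          have := congrFun hh m
          simpa using this)
    rw [← e0, chainExact (Finset.univ.card) Finset.univ rfl]
    apply Finset.sum_congr rfl
    intro j _
    rw [Finset.univ_inter]
  -- conditioning on the full queries is finer than on the masked queries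
  have qmono : ∀ ℰ : Finset (Fin N),
      condEntH p (maskF FA ℰ) Qf ≤ condEntH p (maskF FA ℰ) (maskF FQ ℰ) := by
    intro ℰ
    have h : condEntH p (maskF FA ℰ) Qf ≤ condEntH p (maskF FA ℰ)
        (fun ω => ((fun q : Fin N → 𝔹 => (fun m => if m ∈ ℰ then some (q m) else none))
          (Qf ω))) :=
      condEntH_mono_right hp0 hp1 (maskF FA ℰ) Qf
        (fun q : Fin N → 𝔹 => (fun m => if m ∈ ℰ then some (q m) else none))
    have heq : (fun ω => ((fun q : Fin N → 𝔹 => (fun m => if m ∈ ℰ then some (q m) else none))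
          (Qf ω))) = maskF FQ ℰ := by
      funext ω m
      rfl
    rw [heq] at h
    exact h
  -- cyclic windows
  set ℰi : Fin N → Finset (Fin N) :=
    fun i => (Finset.range E).image (fun t : ℕ => i + (t : Fin N)) with hℰi
  have hinj : ∀ i : Fin N, ∀ t ∈ Finset.range E, ∀ t' ∈ Finset.range E,
      i + (t : Fin N) = i + (t' : Fin N) → t = t' := by
    intro i t ht t' ht' h
    have h2 : (t : Fin N) = (t' : Fin N) := by
      exact add_left_cancel h
    have h3 := congrArg Fin.val h2
    rw [Fin.val_natCast, Fin.val_natCast] at h3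
    rw [Nat.mod_eq_of_lt (lt_of_lt_of_le (Finset.mem_range.mp ht) hEN),
      Nat.mod_eq_of_lt (lt_of_lt_of_le (Finset.mem_range.mp ht') hEN)] at h3
    exact h3
  have hcardi : ∀ i, (ℰi i).card = E := by
    intro i
    simp only [hℰi]
    rw [Finset.card_image_of_injOn
        (fun t ht t' ht' h => hinj i t (Finset.mem_coe.mp ht) t' (Finset.mem_coe.mp ht') h),
      Finset.card_range]
  have hsum1 : ∀ i : Fin N, ∑ j ∈ ℰi i, d j = ∑ t ∈ Finset.range E, d (i + (t : Fin N)) := by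
    intro i
    simp only [hℰi]
    exact Finset.sum_image (hinj i)
  have hsum3 : ∀ t : ℕ, ∑ i : Fin N, d (i + (t : Fin N)) = ∑ j, d j := by
    intro t
    exact Fintype.sum_equiv (Equiv.addRight ((t : Fin N))) _ _ (fun i => rfl)
  have total : ∑ i : Fin N, ∑ j ∈ ℰi i, d j = (E : ℝ) * ∑ j, d j := by
    rw [Finset.sum_congr rfl (fun i _ => hsum1 i), Finset.sum_comm,
      Finset.sum_congr rfl (fun t _ => hsum3 t), Finset.sum_const, Finset.card_range,
      nsmul_eq_mul]
  have chain2 : ∀ i : Fin N, ∑ j ∈ ℰi i, d j ≤ entH p S := fun i =>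
    le_trans (windowLB (ℰi i)) (le_trans (qmono (ℰi i)) (stepA (ℰi i) (hcardi i)))
  have final : (E : ℝ) * ∑ j, d j ≤ (N : ℝ) * entH p S := by
    rw [← total]
    calc ∑ i : Fin N, ∑ j ∈ ℰi i, d j ≤ ∑ _i : Fin N, entH p S :=
          Finset.sum_le_sum (fun i _ => chain2 i)
      _ = (N : ℝ) * entH p S := by
          rw [Finset.sum_const, Finset.card_univ, Fintype.card_fin, nsmul_eq_mul]
  rw [ge_iff_le, fullEq, div_mul_eq_mul_div, div_le_iff₀ (by positivity : (0:ℝ) < N)]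
  linarith
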